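/- Let σ : Fin 6 → List (Fin 6) be the edge-rewriting substitution of the Sierpiński Arrowhead Curve: σ(p) = [(p+1) mod 6, p, (p+5) mod 6] for p even and σ(q) = [(q+5) mod 6, q, (q+1) mod 6] for q odd, extended to words by concatenation. Then for every k ≥ 0 the word σ^k([0]) is self-avoiding: its position sequence p₀ = 0, p_{m+1} = p_m + u(d_m) (where d_m is the m-th letter) consists of 3^k + 1 pairwise distinct points. -/
import Mathlib


/-- The unit vector in direction `d·π/3`, viewing the plane as `ℂ`. -/
noncomputable def dirU (d : Fin 6) : ℂ :=
  Complex.exp ((d : ℕ) * Real.pi / 3 * Complex.I)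

/-- The position sequence of a direction word: `p₀ = 0`, `p_{m+1} = p_m + dirU (ds_m)`. -/
noncomputable def posSeq (ds : List (Fin 6)) (m : ℕ) : ℂ :=
  ((ds.take m).map dirU).sum

/-- The edge-rewriting substitution of the Sierpiński Arrowhead Curve:
`σ(p) = [p+1, p, p+5]` for `p` even and `σ(q) = [q+5, q, q+1]` for `q` odd
(addition in `Fin 6` is mod 6). -/
def sigmaAH (d : Fin 6) : List (Fin 6) :=
  if Even (d : ℕ) then [d + 1, d, d + 5] else [d + 5, d, d + 1]

/-- Application of the substitution to a word, letterwise and concatenated. -/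
def sigmaStep (w : List (Fin 6)) : List (Fin 6) := (w.map sigmaAH).flatten

namespace AHaux


def dirZ (d : Fin 6) : ℤ × ℤ :=
  match d with
  | 0 => (1,0) | 1 => (0,1) | 2 => (-1,1) | 3 => (-1,0) | 4 => (0,-1) | 5 => (1,-1)

def posZ (ds : List (Fin 6)) (m : ℕ) : ℤ × ℤ := ((ds.take m).map dirZ).sum

lemma posZ_zero (w : List (Fin 6)) : posZ w 0 = 0 := rfl

lemma posZ_append (w₁ w₂ : List (Fin 6)) (m : ℕ) :
    posZ (w₁ ++ w₂) m = posZ w₁ m + posZ w₂ (m - w₁.length) := by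
  unfold posZ
  rw [List.take_append, List.map_append, List.sum_append]

lemma posZ_of_length_le (w : List (Fin 6)) {m : ℕ} (h : w.length ≤ m) :
    posZ w m = posZ w w.length := by
  unfold posZ
  rw [List.take_of_length_le h, List.take_length]

lemma posZ_map (f : Fin 6 → Fin 6) (F : ℤ × ℤ →+ ℤ × ℤ)
    (hF : ∀ d, dirZ (f d) = F (dirZ d)) (ds : List (Fin 6)) (m : ℕ) :
    posZ (ds.map f) m = F (posZ ds m) := by
  unfold posZ
  rw [← List.map_take, List.map_map, map_list_sum F, List.map_map]
  congr 1
  exact List.map_congr_left (fun d _ => hF d)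

def F1 : ℤ × ℤ →+ ℤ × ℤ :=
  AddMonoidHom.mk' (fun p => (p.2, p.1)) (by intro a b; simp [Prod.ext_iff])

def F5 : ℤ × ℤ →+ ℤ × ℤ :=
  AddMonoidHom.mk' (fun p => (p.1, -p.1 - p.2)) (by intro a b; simp [Prod.ext_iff]; ring)

lemma F1_apply (p : ℤ × ℤ) : F1 p = (p.2, p.1) := rfl
lemma F5_apply (p : ℤ × ℤ) : F5 p = (p.1, -p.1 - p.2) := rfl

lemma dirZ_f1 : ∀ d, dirZ (1 - d) = F1 (dirZ d) := by decide
lemma dirZ_f5 : ∀ d, dirZ (5 - d) = F5 (dirZ d) := by decide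

lemma sigmaStep_map (f : Fin 6 → Fin 6)
    (hf : ∀ d, sigmaAH (f d) = (sigmaAH d).map f) (w : List (Fin 6)) :
    sigmaStep (w.map f) = (sigmaStep w).map f := by
  unfold sigmaStep
  rw [List.map_map, List.map_flatten, List.map_map]
  congr 1
  exact List.map_congr_left (fun d _ => hf d)

lemma iter_map (f : Fin 6 → Fin 6)
    (hf : ∀ d, sigmaAH (f d) = (sigmaAH d).map f) (k : ℕ) (w : List (Fin 6)) :
    sigmaStep^[k] (w.map f) = (sigmaStep^[k] w).map f := by
  induction k generalizing w with
  | zero => simp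
  | succ n ih => rw [Function.iterate_succ_apply, Function.iterate_succ_apply,
      sigmaStep_map f hf w, ih]

lemma sigmaStep_append (w₁ w₂ : List (Fin 6)) :
    sigmaStep (w₁ ++ w₂) = sigmaStep w₁ ++ sigmaStep w₂ := by
  unfold sigmaStep; rw [List.map_append, List.flatten_append]

lemma iter_append (k : ℕ) (w₁ w₂ : List (Fin 6)) :
    sigmaStep^[k] (w₁ ++ w₂) = sigmaStep^[k] w₁ ++ sigmaStep^[k] w₂ := by
  induction k generalizing w₁ w₂ with
  | zero => simp
  | succ n ih => simp only [Function.iterate_succ_apply, sigmaStep_append, ih]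

lemma hf1 : ∀ d : Fin 6, sigmaAH (1 - d) = (sigmaAH d).map (fun x => 1 - x) := by decide
lemma hf5 : ∀ d : Fin 6, sigmaAH (5 - d) = (sigmaAH d).map (fun x => 5 - x) := by decide

lemma decomp (k : ℕ) :
    sigmaStep^[k+1] [0] =
      (sigmaStep^[k] [0]).map (fun x => 1 - x) ++ sigmaStep^[k] [0] ++
        (sigmaStep^[k] [0]).map (fun x => 5 - x) := by
  rw [Function.iterate_succ_apply]
  have h105 : sigmaStep [0] = [1] ++ [0] ++ [5] := by decide
  rw [h105, iter_append, iter_append]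
  congr 1
  · congr 1
    · have h1 : ([1] : List (Fin 6)) = [0].map (fun x => 1 - x) := by decide
      rw [h1, iter_map _ hf1]
  · have h5 : ([5] : List (Fin 6)) = [0].map (fun x => 5 - x) := by decide
    rw [h5, iter_map _ hf5]

def GoodP (k : ℕ) (w : List (Fin 6)) : Prop :=
  w.length = 3 ^ k ∧
  (∀ m₁ m₂, m₁ ≤ 3 ^ k → m₂ ≤ 3 ^ k → posZ w m₁ = posZ w m₂ → m₁ = m₂) ∧
  (∀ m, m ≤ 3 ^ k →
    0 ≤ (posZ w m).1 ∧ 0 ≤ (posZ w m).2 ∧ (posZ w m).1 + (posZ w m).2 ≤ 2 ^ k) ∧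
  posZ w (3 ^ k) = ((2 ^ k : ℤ), 0) ∧
  (∀ m, m ≤ 3 ^ k → posZ w m ≠ ((0 : ℤ), (2 ^ k : ℤ)))


lemma step (k : ℕ) (w : List (Fin 6)) (hG : GoodP k w) :
    GoodP (k+1) (w.map (fun x => 1 - x) ++ w ++ w.map (fun x => 5 - x)) := by
  obtain ⟨hlen, hinj, hbnd, hlast, hapex⟩ := hG
  set N := 3 ^ k with hNdef
  have hN1 : 1 ≤ N := Nat.one_le_pow _ _ (by norm_num)
  have h2pos : (0:ℤ) < 2 ^ k := by positivity
  have h3 : 3 ^ (k+1) = 3 * N := by rw [pow_succ]; ring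
  have h2 : (2:ℤ) ^ (k+1) = 2 * 2 ^ k := by rw [pow_succ]; ring
  set A := w.map (fun x : Fin 6 => 1 - x) with hA
  set C := w.map (fun x : Fin 6 => 5 - x) with hC
  have hAlen : A.length = N := by simp [hA, hlen]
  have hClen : C.length = N := by simp [hC, hlen]
  have hwC : (A ++ w).length = 2 * N := by simp [hAlen, hlen]; ring
  have hlen' : (A ++ w ++ C).length = 3 ^ (k+1) := by
    rw [List.length_append, List.length_append, hAlen, hlen, hClen, h3]; ring
  have hval : ∀ m, posZ (A ++ w ++ C) m
      = F1 (posZ w m) + posZ w (m - N) + F5 (posZ w (m - 2*N)) := by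
    intro m
    rw [posZ_append, posZ_append, hwC, hAlen, hA, hC,
      posZ_map _ F1 dirZ_f1, posZ_map _ F5 dirZ_f5]
  have hvA : ∀ m, m ≤ N → posZ (A ++ w ++ C) m = ((posZ w m).2, (posZ w m).1) := by
    intro m hm
    have e1 : m - N = 0 := by omega
    have e2 : m - 2*N = 0 := by omega
    rw [hval m, e1, e2, posZ_zero, map_zero, F1_apply]
    simp
  have hvB : ∀ m, N ≤ m → m ≤ 2*N → posZ (A ++ w ++ C) m =
      ((posZ w (m - N)).1, 2 ^ k + (posZ w (m - N)).2) := by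
    intro m hm hm2
    have e2 : m - 2*N = 0 := by omega
    rw [hval m, e2, posZ_zero, map_zero, add_zero,
      posZ_of_length_le w (show w.length ≤ m by omega), hlen, hlast, F1_apply]
    simp [Prod.ext_iff]
  have hvC : ∀ m, 2*N ≤ m → posZ (A ++ w ++ C) m =
      (2 ^ k + (posZ w (m - 2*N)).1,
        2 ^ k - (posZ w (m - 2*N)).1 - (posZ w (m - 2*N)).2) := by
    intro m hm
    rw [hval m,
      posZ_of_length_le w (show w.length ≤ m by omega),
      posZ_of_length_le w (show w.length ≤ m - N by omega), hlen, hlast,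
      F1_apply, F5_apply]
    simp [Prod.ext_iff]
    ring
  refine ⟨hlen', ?_, ?_, ?_, ?_⟩
  · -- injectivity
    have key : ∀ m₁ m₂, m₁ ≤ m₂ → m₂ ≤ 3 ^ (k+1) →
        posZ (A ++ w ++ C) m₁ = posZ (A ++ w ++ C) m₂ → m₁ = m₂ := by
      intro m₁ m₂ hle hm2 heq
      rw [h3] at hm2
      rcases le_or_gt m₁ N with h1A | h1A
      · rcases le_or_gt m₂ N with h2A | h2A
        · -- A A
          rw [hvA _ h1A, hvA _ h2A, Prod.ext_iff] at heq
          obtain ⟨e1, e2⟩ := heq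
          simp at e1 e2
          exact hinj _ _ h1A h2A (Prod.ext e2 e1)
        · rcases le_or_gt m₂ (2*N) with h2B | h2B
          · -- A B
            rw [hvA _ h1A, hvB _ (by omega) h2B, Prod.ext_iff] at heq
            obtain ⟨e1, e2⟩ := heq
            simp at e1 e2
            obtain ⟨b1, b2, b3⟩ := hbnd m₁ h1A
            obtain ⟨c1, c2, c3⟩ := hbnd (m₂ - N) (by omega)
            have hq1 : posZ w m₁ = posZ w N := by
              rw [hlast]
              exact Prod.ext (by show (posZ w m₁).1 = 2^k; omega)
                (by show (posZ w m₁).2 = 0; omega)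
            have hq2 : posZ w (m₂ - N) = posZ w 0 := by
              rw [posZ_zero]
              exact Prod.ext (by show (posZ w (m₂-N)).1 = (0 : ℤ × ℤ).1; simp; omega)
                (by show (posZ w (m₂-N)).2 = (0 : ℤ × ℤ).2; simp; omega)
            have e3 : m₁ = N := hinj _ _ h1A le_rfl hq1
            have e4 : m₂ - N = 0 := hinj _ _ (by omega) (by omega) hq2
            omega
          · -- A C
            rw [hvA _ h1A, hvC _ (by omega), Prod.ext_iff] at heq
            obtain ⟨e1, e2⟩ := heq
            simp at e1 e2
            obtain ⟨b1, b2, b3⟩ := hbnd m₁ h1A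
            obtain ⟨c1, c2, c3⟩ := hbnd (m₂ - 2*N) (by omega)
            exfalso
            apply hapex m₁ h1A
            exact Prod.ext (by show (posZ w m₁).1 = 0; omega)
              (by show (posZ w m₁).2 = 2^k; omega)
      · rcases le_or_gt m₁ (2*N) with h1B | h1B
        · rcases le_or_gt m₂ (2*N) with h2B | h2B
          · -- B B
            rw [hvB _ (by omega) h1B, hvB _ (by omega) h2B, Prod.ext_iff] at heq
            obtain ⟨e1, e2⟩ := heq
            simp at e1 e2
            have : m₁ - N = m₂ - N := hinj _ _ (by omega) (by omega) (Prod.ext e1 e2)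
            omega
          · -- B C
            rw [hvB _ (by omega) h1B, hvC _ (by omega), Prod.ext_iff] at heq
            obtain ⟨e1, e2⟩ := heq
            simp at e1 e2
            obtain ⟨b1, b2, b3⟩ := hbnd (m₁ - N) (by omega)
            obtain ⟨c1, c2, c3⟩ := hbnd (m₂ - 2*N) (by omega)
            have hq1 : posZ w (m₁ - N) = posZ w N := by
              rw [hlast]
              exact Prod.ext (by show (posZ w (m₁-N)).1 = 2^k; omega)
                (by show (posZ w (m₁-N)).2 = 0; omega)
            have hq2 : posZ w (m₂ - 2*N) = posZ w 0 := by
              rw [posZ_zero]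
              exact Prod.ext (by show (posZ w (m₂-2*N)).1 = (0 : ℤ × ℤ).1; simp; omega)
                (by show (posZ w (m₂-2*N)).2 = (0 : ℤ × ℤ).2; simp; omega)
            have e3 : m₁ - N = N := hinj _ _ (by omega) le_rfl hq1
            have e4 : m₂ - 2*N = 0 := hinj _ _ (by omega) (by omega) hq2
            omega
        · -- C C
          rw [hvC _ (by omega), hvC _ (by omega), Prod.ext_iff] at heq
          obtain ⟨e1, e2⟩ := heq
          simp at e1 e2
          have : m₁ - 2*N = m₂ - 2*N :=
            hinj _ _ (by omega) (by omega) (Prod.ext (by omega) (by omega))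
          omega
    intro m₁ m₂ hm1 hm2 heq
    rcases le_total m₁ m₂ with h | h
    · exact key m₁ m₂ h hm2 heq
    · exact (key m₂ m₁ h hm1 heq.symm).symm
  · -- bounds
    intro m hm
    rw [h3] at hm
    rw [h2]
    rcases le_or_gt m N with h1 | h1
    · obtain ⟨b1, b2, b3⟩ := hbnd m h1
      rw [hvA _ h1]
      exact ⟨by simpa using b2, by simpa using b1, by simp; omega⟩
    · rcases le_or_gt m (2*N) with h2' | h2'
      · obtain ⟨b1, b2, b3⟩ := hbnd (m - N) (by omega)
        rw [hvB _ (by omega) h2']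
        exact ⟨by simpa using b1, by simp; omega, by simp; omega⟩
      · obtain ⟨b1, b2, b3⟩ := hbnd (m - 2*N) (by omega)
        rw [hvC _ (by omega)]
        exact ⟨by simp; omega, by simp; omega, by simp; omega⟩
  · -- endpoint
    rw [h3, hvC _ (by omega), show 3*N - 2*N = N by omega, hlast]
    rw [h2]
    exact Prod.ext (by simp; ring) (by simp)
  · -- apex avoidance
    intro m hm
    rw [h3] at hm
    rw [h2]
    rcases le_or_gt m N with h1 | h1
    · obtain ⟨b1, b2, b3⟩ := hbnd m h1
      rw [hvA _ h1]
      intro hcon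
      rw [Prod.ext_iff] at hcon
      obtain ⟨e1, e2⟩ := hcon
      simp at e1 e2
      omega
    · rcases le_or_gt m (2*N) with h2' | h2'
      · obtain ⟨b1, b2, b3⟩ := hbnd (m - N) (by omega)
        rw [hvB _ (by omega) h2']
        intro hcon
        rw [Prod.ext_iff] at hcon
        obtain ⟨e1, e2⟩ := hcon
        simp at e1 e2
        apply hapex (m - N) (by omega)
        exact Prod.ext (by show _ = (0:ℤ); omega) (by show _ = (2:ℤ)^k; omega)
      · obtain ⟨b1, b2, b3⟩ := hbnd (m - 2*N) (by omega)
        rw [hvC _ (by omega)]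
        intro hcon
        rw [Prod.ext_iff] at hcon
        obtain ⟨e1, e2⟩ := hcon
        simp at e1 e2
        omega

lemma good : ∀ k, GoodP k (sigmaStep^[k] [0]) := by
  intro k
  induction k with
  | zero =>
    refine ⟨rfl, ?_, ?_, by decide, ?_⟩
    · intro m₁ m₂ h₁ h₂ h
      interval_cases m₁ <;> interval_cases m₂ <;> first | rfl | (exfalso; revert h; decide)
    · intro m hm; interval_cases m <;> decide
    · intro m hm; interval_cases m <;> decide
  | succ k ih =>
    rw [decomp k]
    exact step k _ ih


noncomputable def om : ℂ := Complex.exp ((Real.pi : ℂ) / 3 * Complex.I)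

lemma dirU_eq_pow (d : Fin 6) : dirU d = om ^ (d : ℕ) := by
  unfold dirU om
  rw [← Complex.exp_nat_mul]
  congr 1
  push_cast
  ring

lemma om3 : om ^ 3 = -1 := by
  unfold om
  rw [← Complex.exp_nat_mul]
  rw [show ((3:ℕ):ℂ) * ((Real.pi : ℂ) / 3 * Complex.I) = Real.pi * Complex.I by push_cast; ring]
  exact Complex.exp_pi_mul_I

lemma om_im_pos : 0 < om.im := by
  unfold om
  rw [show ((Real.pi:ℂ))/3 * Complex.I = ((Real.pi/3 : ℝ):ℂ) * Complex.I by push_cast; ring,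
    Complex.exp_ofReal_mul_I_im]
  apply Real.sin_pos_of_pos_of_lt_pi
  · positivity
  · linarith [Real.pi_pos]

lemma om2 : om ^ 2 = om - 1 := by
  have h3 := om3
  have hfac : (om + 1) * (om ^ 2 - om + 1) = 0 := by linear_combination h3
  rcases mul_eq_zero.1 hfac with h | h
  · exfalso
    have heq : om = -1 := by linear_combination h
    have hpos := om_im_pos
    rw [heq] at hpos
    simp at hpos
  · linear_combination h

noncomputable def toC : ℤ × ℤ →+ ℂ :=
  AddMonoidHom.mk' (fun p => (p.1 : ℂ) + (p.2 : ℂ) * om)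
    (by intro a b; simp [Prod.fst_add, Prod.snd_add]; push_cast; ring)

lemma toC_apply (p : ℤ × ℤ) : toC p = (p.1 : ℂ) + (p.2 : ℂ) * om := rfl

lemma dirU_eq (d : Fin 6) : dirU d = toC (dirZ d) := by
  have h2 := om2
  have h3 := om3
  fin_cases d <;>
    simp only [dirU_eq_pow, dirZ, toC_apply] <;> push_cast <;>
    first
      | (show om ^ 0 = 1 + 0 * om; ring)
      | (show om ^ 1 = 0 + 1 * om; ring)
      | (show om ^ 2 = -1 + 1 * om; linear_combination h2)
      | (show om ^ 3 = -1 + 0 * om; linear_combination h3)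
      | (show om ^ 4 = 0 + (-1) * om; linear_combination om * h3)
      | (show om ^ 5 = 1 + (-1) * om; linear_combination om ^ 2 * h3 - h2)

lemma posSeq_eq (ds : List (Fin 6)) (m : ℕ) : posSeq ds m = toC (posZ ds m) := by
  unfold posSeq posZ
  rw [map_list_sum toC, List.map_map]
  congr 1
  exact List.map_congr_left (fun d _ => dirU_eq d)

lemma toC_inj : Function.Injective toC := by
  intro p q h
  rw [toC_apply, toC_apply] at h
  have him : (p.2 : ℝ) = (q.2 : ℝ) := by
    have h' := congrArg Complex.im h
    simp [Complex.add_im, Complex.mul_im] at h'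
    have := om_im_pos
    rcases h' with h' | h'
    · exact_mod_cast h'
    · linarith
  have hp2 : p.2 = q.2 := by exact_mod_cast him
  have hp1 : p.1 = q.1 := by
    rw [hp2] at h
    have h1 : (p.1 : ℂ) = (q.1 : ℂ) := by linear_combination h
    exact_mod_cast h1
  exact Prod.ext hp1 hp2


end AHaux

/-- For every `k ≥ 0`, the word `σ^k([0])` (of length `3^k`) is
self-avoiding: its position sequence consists of `3^k + 1` pairwise distinct points. -/
theorem arrowhead_self_avoiding (k : ℕ) :
    (sigmaStep^[k] [0]).length = 3 ^ k ∧
    Function.Injective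
      (fun m : Fin ((sigmaStep^[k] [0]).length + 1) => posSeq (sigmaStep^[k] [0]) m) := by
  obtain ⟨hlen, hinj, -, -, -⟩ := AHaux.good k
  refine ⟨hlen, ?_⟩
  intro m₁ m₂ h
  simp only [AHaux.posSeq_eq] at h
  have hz := AHaux.toC_inj h
  have h1 : (m₁ : ℕ) ≤ 3 ^ k := by have := m₁.isLt; omega
  have h2 : (m₂ : ℕ) ≤ 3 ^ k := by have := m₂.isLt; omega
  exact Fin.ext (hinj _ _ h1 h2 hz)
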